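/- Let ⟨H,T⟩ and ⟨H',T'⟩ be HT-traces of the same length λ, over alphabets 𝒜 and 𝒜⁺ ⊇ 𝒜 respectively, with associated three-valued valuations m and m'. Suppose m'[k, L_φ] = m[k, φ] for every temporal formula φ over 𝒜 and every 0 ≤ k < λ, where L_φ are fresh labelling atoms in 𝒜⁺ with L_a = a for each atom a ∈ 𝒜. Then for every formula μ over 𝒜, ⟨H',T'⟩ ⊨ η(μ) (every formula in the definition η(μ) is satisfied by ⟨H',T'⟩ at time 0). -/
import Mathlib


/-- Syntax of temporal formulas over an alphabet of atoms `α`: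
`⊥`, atoms, `∧`, `∨`, `→`, previous `●`, since `S`, trigger `T`,
next `○`, until `U`, release `R`. -/
inductive TForm (α : Type) : Type
  | bot   : TForm α
  | atom  : α → TForm α
  | conj  : TForm α → TForm α → TForm α
  | disj  : TForm α → TForm α → TForm α
  | impl  : TForm α → TForm α → TForm α
  | prev  : TForm α → TForm α
  | since : TForm α → TForm α → TForm α
  | trig  : TForm α → TForm α → TForm α
  | next  : TForm α → TForm α
  | untl  : TForm α → TForm α → TForm α
  | rels  : TForm α → TForm α → TForm α

/-- THT_f satisfaction `⟨H,T⟩,k ⊨ φ` for finite traces of length `n`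
(time points are `0 ≤ k < n`). -/
def sat {α : Type} (n : ℕ) : (ℕ → Set α) → (ℕ → Set α) → ℕ → TForm α → Prop
  | _, _, _, .bot => False
  | H, _, k, .atom a => a ∈ H k
  | H, T, k, .conj φ ψ => sat n H T k φ ∧ sat n H T k ψ
  | H, T, k, .disj φ ψ => sat n H T k φ ∨ sat n H T k ψ
  | H, T, k, .impl φ ψ =>
      (sat n H T k φ → sat n H T k ψ) ∧ (sat n T T k φ → sat n T T k ψ)
  | H, T, k, .prev φ => 0 < k ∧ sat n H T (k - 1) φ
  | H, T, k, .since φ ψ =>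
      ∃ j, j ≤ k ∧ sat n H T j ψ ∧ ∀ i, j < i → i ≤ k → sat n H T i φ
  | H, T, k, .trig φ ψ =>
      ∀ j, j ≤ k → sat n H T j ψ ∨ ∃ i, j < i ∧ i ≤ k ∧ sat n H T i φ
  | H, T, k, .next φ => k + 1 < n ∧ sat n H T (k + 1) φ
  | H, T, k, .untl φ ψ =>
      ∃ j, k ≤ j ∧ j < n ∧ sat n H T j ψ ∧ ∀ i, k ≤ i → i < j → sat n H T i φ
  | H, T, k, .rels φ ψ =>
      ∀ j, k ≤ j → j < n → sat n H T j ψ ∨ ∃ i, k ≤ i ∧ i < j ∧ sat n H T i φ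

open Classical in
/-- The three-valued valuation `m[k,φ] ∈ {0,1,2}` associated with an HT-trace
`⟨H,T⟩` of length `n` (an empty `Finset.inf` is `⊤ = 2`, an empty `Finset.sup` is `⊥ = 0`). -/
noncomputable def val {α : Type} (H T : ℕ → Set α) (n : ℕ) : ℕ → TForm α → Fin 3
  | _, .bot => 0
  | k, .atom a => if a ∈ H k then 2 else if a ∈ T k then 1 else 0
  | k, .conj φ ψ => min (val H T n k φ) (val H T n k ψ)
  | k, .disj φ ψ => max (val H T n k φ) (val H T n k ψ)
  | k, .impl φ ψ => if val H T n k φ ≤ val H T n k ψ then 2 else val H T n k ψ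
  | k, .prev φ => if k = 0 then 0 else val H T n (k - 1) φ
  | k, .since φ ψ =>
      (Finset.range (k + 1)).sup fun j =>
        min (val H T n j ψ) ((Finset.Ioc j k).inf fun i => val H T n i φ)
  | k, .trig φ ψ =>
      (Finset.range (k + 1)).inf fun j =>
        max (val H T n j ψ) ((Finset.Ioc j k).sup fun i => val H T n i φ)
  | k, .next φ => if k + 1 = n then 0 else val H T n (k + 1) φ
  | k, .untl φ ψ =>
      (Finset.Ico k n).sup fun j =>
        min (val H T n j ψ) ((Finset.Ico k j).inf fun i => val H T n i φ)
  | k, .rels φ ψ =>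
      (Finset.Ico k n).inf fun j =>
        max (val H T n j ψ) ((Finset.Ico k j).sup fun i => val H T n i φ)

/-- Renaming of atoms in a formula. -/
def TForm.map {α β : Type} (f : α → β) : TForm α → TForm β
  | .bot => .bot
  | .atom a => .atom (f a)
  | .conj φ ψ => .conj (φ.map f) (ψ.map f)
  | .disj φ ψ => .disj (φ.map f) (ψ.map f)
  | .impl φ ψ => .impl (φ.map f) (ψ.map f)
  | .prev φ => .prev (φ.map f)
  | .since φ ψ => .since (φ.map f) (ψ.map f)
  | .trig φ ψ => .trig (φ.map f) (ψ.map f)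
  | .next φ => .next (φ.map f)
  | .untl φ ψ => .untl (φ.map f) (ψ.map f)
  | .rels φ ψ => .rels (φ.map f) (ψ.map f)

/-- The set of subformulas of a formula (including the formula itself). -/
def subf {α : Type} : TForm α → Set (TForm α)
  | .bot => {.bot}
  | .atom a => {.atom a}
  | .conj φ ψ => insert (.conj φ ψ) (subf φ ∪ subf ψ)
  | .disj φ ψ => insert (.disj φ ψ) (subf φ ∪ subf ψ)
  | .impl φ ψ => insert (.impl φ ψ) (subf φ ∪ subf ψ)
  | .prev φ => insert (.prev φ) (subf φ)
  | .since φ ψ => insert (.since φ ψ) (subf φ ∪ subf ψ)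
  | .trig φ ψ => insert (.trig φ ψ) (subf φ ∪ subf ψ)
  | .next φ => insert (.next φ) (subf φ)
  | .untl φ ψ => insert (.untl φ ψ) (subf φ ∪ subf ψ)
  | .rels φ ψ => insert (.rels φ ψ) (subf φ ∪ subf ψ)

/-- The set of subformulas of the formulas of a theory `Γ`. -/
def subfTh {α : Type} (Γ : Set (TForm α)) : Set (TForm α) := ⋃ φ ∈ Γ, subf φ

/-- The extended alphabet `𝒜⁺`: original atoms (`Sum.inl`) plus a fresh
labelling atom `L_μ` (`Sum.inr μ`) for every formula `μ` over `𝒜`. -/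
abbrev ExtAlph (α : Type) := α ⊕ TForm α

/-- The label `L_μ` of a formula `μ`, as a formula over the extended alphabet:
`L_⊥ = ⊥`, `L_a = a` for atoms `a`, and a fresh atom `Sum.inr μ` otherwise. -/
def lab {α : Type} : TForm α → TForm (ExtAlph α)
  | .bot => .bot
  | .atom a => .atom (Sum.inl a)
  | μ => .atom (Sum.inr μ)

/-- Negation `¬φ := φ → ⊥`. -/
def tneg {β : Type} (φ : TForm β) : TForm β := .impl φ .bot

/-- Truth `⊤ := ¬⊥`. -/
def ttop {β : Type} : TForm β := tneg .bot

/-- Double implication `φ ↔ ψ`. -/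
def tiff {β : Type} (φ ψ : TForm β) : TForm β := .conj (.impl φ ψ) (.impl ψ φ)

/-- Always `□φ := ⊥ R φ`. -/
def talways {β : Type} (φ : TForm β) : TForm β := .rels .bot φ

/-- Weak next `○̂φ := ¬○⊤ ∨ ○φ`. -/
def twnext {β : Type} (φ : TForm β) : TForm β := .disj (tneg (.next ttop)) (.next φ)

/-- The definition `η(μ)` of the label `L_μ` of a formula `μ`. -/
def eta {α : Type} : TForm α → Set (TForm (ExtAlph α))
  | .bot => ∅
  | .atom _ => ∅
  | .conj φ ψ =>
      {talways (tiff (lab (.conj φ ψ)) (.conj (lab φ) (lab ψ)))}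
  | .disj φ ψ =>
      {talways (tiff (lab (.disj φ ψ)) (.disj (lab φ) (lab ψ)))}
  | .impl φ ψ =>
      {talways (tiff (lab (.impl φ ψ)) (.impl (lab φ) (lab ψ)))}
  | .prev φ =>
      {twnext (talways (tiff (lab (.prev φ)) (.prev (lab φ)))),
       tneg (lab (.prev φ))}
  | .since φ ψ =>
      {twnext (talways (tiff (lab (.since φ ψ))
          (.disj (lab ψ) (.conj (lab φ) (.prev (lab (.since φ ψ))))))),
       tiff (lab (.since φ ψ)) (lab ψ)}
  | .trig φ ψ =>
      {twnext (talways (tiff (lab (.trig φ ψ))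
          (.conj (lab ψ) (.disj (lab φ) (.prev (lab (.trig φ ψ))))))),
       tiff (lab (.trig φ ψ)) (lab ψ)}
  | .next φ =>
      {twnext (talways (tiff (.prev (lab (.next φ))) (lab φ))),
       talways (.impl (tneg (.next ttop)) (tneg (lab (.next φ))))}
  | .untl φ ψ =>
      {twnext (talways (tiff (.prev (lab (.untl φ ψ)))
          (.disj (.prev (lab ψ)) (.conj (.prev (lab φ)) (lab (.untl φ ψ)))))),
       talways (.impl (tneg (.next ttop)) (tiff (lab (.untl φ ψ)) (lab ψ)))}
  | .rels φ ψ =>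
      {twnext (talways (tiff (.prev (lab (.rels φ ψ)))
          (.conj (.prev (lab ψ)) (.disj (.prev (lab φ)) (lab (.rels φ ψ)))))),
       talways (.impl (tneg (.next ttop)) (tiff (lab (.rels φ ψ)) (lab ψ)))}

/-- The translation `σ(Γ) = {L_φ | φ ∈ Γ} ∪ ⋃ {η(μ) | μ ∈ subf(Γ)}`. -/
def sigmaT {α : Type} (Γ : Set (TForm α)) : Set (TForm (ExtAlph α)) :=
  (lab '' Γ) ∪ ⋃ μ ∈ subfTh Γ, eta μ

/-- Restriction of a trace over the extended alphabet to the original alphabet `𝒜`. -/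
def restrict {α : Type} (X : ℕ → Set (ExtAlph α)) : ℕ → Set α :=
  fun k => {a | Sum.inl a ∈ X k}
private lemma fin3_le_two (a : Fin 3) : a ≤ 2 := by revert a; decide
private lemma fin3_eq2 (a : Fin 3) : a = 2 ↔ 2 ≤ a := by revert a; decide
private lemma fin3_impl2 (a b : Fin 3) :
    (if a ≤ b then (2:Fin 3) else b) = 2 ↔ ((a = 2 → b = 2) ∧ (1 ≤ a → 1 ≤ b)) := by
  revert a b; decide
private lemma fin3_impl1 (a b : Fin 3) :
    1 ≤ (if a ≤ b then (2:Fin 3) else b) ↔ (1 ≤ a → 1 ≤ b) := by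
  revert a b; decide

lemma valsat {α : Type} (H T : ℕ → Set α) (n : ℕ) (hHT : ∀ i, i < n → H i ⊆ T i) :
    ∀ (φ : TForm α) (k : ℕ), k < n →
      ((val H T n k φ = 2 ↔ sat n H T k φ) ∧ (1 ≤ val H T n k φ ↔ sat n T T k φ)) := by
  intro φ
  induction φ with
  | bot =>
    intro k hk
    simp only [val, sat]
    exact ⟨by simp, by simp⟩
  | atom a =>
    intro k hk
    simp only [val, sat]
    by_cases h1 : a ∈ H k
    · have := hHT k hk h1
      simp [h1, this]
    · by_cases h2 : a ∈ T k <;> simp [h1, h2]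
  | conj φ ψ ihφ ihψ =>
    intro k hk
    obtain ⟨h1, h2⟩ := ihφ k hk
    obtain ⟨h3, h4⟩ := ihψ k hk
    simp only [val, sat]
    rw [fin3_eq2, le_min_iff, le_min_iff, ← fin3_eq2, ← fin3_eq2, h1, h2, h3, h4]
    exact ⟨Iff.rfl, Iff.rfl⟩
  | disj φ ψ ihφ ihψ =>
    intro k hk
    obtain ⟨h1, h2⟩ := ihφ k hk
    obtain ⟨h3, h4⟩ := ihψ k hk
    simp only [val, sat]
    rw [fin3_eq2, le_max_iff, le_max_iff, ← fin3_eq2, ← fin3_eq2, h1, h2, h3, h4]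
    exact ⟨Iff.rfl, Iff.rfl⟩
  | impl φ ψ ihφ ihψ =>
    intro k hk
    obtain ⟨h1, h2⟩ := ihφ k hk
    obtain ⟨h3, h4⟩ := ihψ k hk
    simp only [val, sat]
    rw [fin3_impl2, fin3_impl1, h1, h2, h3, h4]
    exact ⟨Iff.rfl, by tauto⟩
  | prev φ ih =>
    intro k hk
    simp only [val, sat]
    rcases Nat.eq_zero_or_pos k with h | h
    · subst h; simp
    · have hk' : k - 1 < n := by omega
      obtain ⟨h1, h2⟩ := ih (k - 1) hk'
      rw [if_neg (by omega), h1, h2]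
      simp [h]
  | next φ ih =>
    intro k hk
    simp only [val, sat]
    by_cases h : k + 1 = n
    · rw [if_pos h]
      constructor <;> constructor <;> intro hh
      · exact absurd hh (by decide)
      · omega
      · exact absurd hh (by decide)
      · omega
    · have hk' : k + 1 < n := by omega
      obtain ⟨h1, h2⟩ := ih (k + 1) hk'
      rw [if_neg h, h1, h2]
      constructor <;> constructor <;> intro hh
      · exact ⟨hk', hh⟩
      · exact hh.2
      · exact ⟨hk', hh⟩
      · exact hh.2
  | since φ ψ ihφ ihψ =>
    intro k hk
    simp only [val, sat]
    constructor
    · rw [fin3_eq2, Finset.le_sup_iff (by decide : (⊥:Fin 3) < 2)]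
      simp only [Finset.mem_range, Nat.lt_succ_iff, le_min_iff, Finset.le_inf_iff,
        Finset.mem_Ioc, ← fin3_eq2, and_imp]
      constructor
      · rintro ⟨j, hj, hψ, hφ⟩
        exact ⟨j, hj, ((ihψ j (by omega)).1).mp hψ,
          fun i hi1 hi2 => ((ihφ i (by omega)).1).mp (hφ i hi1 hi2)⟩
      · rintro ⟨j, hj, hψ, hφ⟩
        exact ⟨j, hj, ((ihψ j (by omega)).1).mpr hψ,
          fun i hi1 hi2 => ((ihφ i (by omega)).1).mpr (hφ i hi1 hi2)⟩
    · rw [Finset.le_sup_iff (by decide : (⊥:Fin 3) < 1)]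
      simp only [Finset.mem_range, Nat.lt_succ_iff, le_min_iff, Finset.le_inf_iff,
        Finset.mem_Ioc, and_imp]
      constructor
      · rintro ⟨j, hj, hψ, hφ⟩
        exact ⟨j, hj, ((ihψ j (by omega)).2).mp hψ,
          fun i hi1 hi2 => ((ihφ i (by omega)).2).mp (hφ i hi1 hi2)⟩
      · rintro ⟨j, hj, hψ, hφ⟩
        exact ⟨j, hj, ((ihψ j (by omega)).2).mpr hψ,
          fun i hi1 hi2 => ((ihφ i (by omega)).2).mpr (hφ i hi1 hi2)⟩
  | trig φ ψ ihφ ihψ =>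
    intro k hk
    simp only [val, sat]
    constructor
    · rw [fin3_eq2, Finset.le_inf_iff]
      simp only [Finset.mem_range, Nat.lt_succ_iff, le_max_iff,
        Finset.le_sup_iff (by decide : (⊥:Fin 3) < 2), Finset.mem_Ioc, ← fin3_eq2]
      constructor
      · intro hall j hj
        rcases hall j hj with h | ⟨i, ⟨hi1, hi2⟩, hφi⟩
        · exact Or.inl (((ihψ j (by omega)).1).mp h)
        · exact Or.inr ⟨i, hi1, hi2, ((ihφ i (by omega)).1).mp hφi⟩
      · intro hall j hj
        rcases hall j hj with h | ⟨i, hi1, hi2, hφi⟩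
        · exact Or.inl (((ihψ j (by omega)).1).mpr h)
        · exact Or.inr ⟨i, ⟨hi1, hi2⟩, ((ihφ i (by omega)).1).mpr hφi⟩
    · rw [Finset.le_inf_iff]
      simp only [Finset.mem_range, Nat.lt_succ_iff, le_max_iff,
        Finset.le_sup_iff (by decide : (⊥:Fin 3) < 1), Finset.mem_Ioc]
      constructor
      · intro hall j hj
        rcases hall j hj with h | ⟨i, ⟨hi1, hi2⟩, hφi⟩
        · exact Or.inl (((ihψ j (by omega)).2).mp h)
        · exact Or.inr ⟨i, hi1, hi2, ((ihφ i (by omega)).2).mp hφi⟩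
      · intro hall j hj
        rcases hall j hj with h | ⟨i, hi1, hi2, hφi⟩
        · exact Or.inl (((ihψ j (by omega)).2).mpr h)
        · exact Or.inr ⟨i, ⟨hi1, hi2⟩, ((ihφ i (by omega)).2).mpr hφi⟩
  | untl φ ψ ihφ ihψ =>
    intro k hk
    simp only [val, sat]
    constructor
    · rw [fin3_eq2, Finset.le_sup_iff (by decide : (⊥:Fin 3) < 2)]
      simp only [Finset.mem_Ico, le_min_iff, Finset.le_inf_iff, ← fin3_eq2, and_imp]
      constructor
      · rintro ⟨j, ⟨hj1, hj2⟩, hψ, hφ⟩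
        exact ⟨j, hj1, hj2, ((ihψ j hj2).1).mp hψ,
          fun i hi1 hi2 => ((ihφ i (by omega)).1).mp (hφ i hi1 hi2)⟩
      · rintro ⟨j, hj1, hj2, hψ, hφ⟩
        exact ⟨j, ⟨hj1, hj2⟩, ((ihψ j hj2).1).mpr hψ,
          fun i hi1 hi2 => ((ihφ i (by omega)).1).mpr (hφ i hi1 hi2)⟩
    · rw [Finset.le_sup_iff (by decide : (⊥:Fin 3) < 1)]
      simp only [Finset.mem_Ico, le_min_iff, Finset.le_inf_iff, and_imp]
      constructor
      · rintro ⟨j, ⟨hj1, hj2⟩, hψ, hφ⟩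
        exact ⟨j, hj1, hj2, ((ihψ j hj2).2).mp hψ,
          fun i hi1 hi2 => ((ihφ i (by omega)).2).mp (hφ i hi1 hi2)⟩
      · rintro ⟨j, hj1, hj2, hψ, hφ⟩
        exact ⟨j, ⟨hj1, hj2⟩, ((ihψ j hj2).2).mpr hψ,
          fun i hi1 hi2 => ((ihφ i (by omega)).2).mpr (hφ i hi1 hi2)⟩
  | rels φ ψ ihφ ihψ =>
    intro k hk
    simp only [val, sat]
    constructor
    · rw [fin3_eq2, Finset.le_inf_iff]
      simp only [Finset.mem_Ico, le_max_iff,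
        Finset.le_sup_iff (by decide : (⊥:Fin 3) < 2), ← fin3_eq2, and_imp]
      constructor
      · intro hall j hj1 hj2
        rcases hall j hj1 hj2 with h | ⟨i, ⟨hi1, hi2⟩, hφi⟩
        · exact Or.inl (((ihψ j hj2).1).mp h)
        · exact Or.inr ⟨i, hi1, hi2, ((ihφ i (by omega)).1).mp hφi⟩
      · intro hall j hj1 hj2
        rcases hall j hj1 hj2 with h | ⟨i, hi1, hi2, hφi⟩
        · exact Or.inl (((ihψ j hj2).1).mpr h)
        · exact Or.inr ⟨i, ⟨hi1, hi2⟩, ((ihφ i (by omega)).1).mpr hφi⟩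
    · rw [Finset.le_inf_iff]
      simp only [Finset.mem_Ico, le_max_iff,
        Finset.le_sup_iff (by decide : (⊥:Fin 3) < 1), and_imp]
      constructor
      · intro hall j hj1 hj2
        rcases hall j hj1 hj2 with h | ⟨i, ⟨hi1, hi2⟩, hφi⟩
        · exact Or.inl (((ihψ j hj2).2).mp h)
        · exact Or.inr ⟨i, hi1, hi2, ((ihφ i (by omega)).2).mp hφi⟩
      · intro hall j hj1 hj2
        rcases hall j hj1 hj2 with h | ⟨i, hi1, hi2, hφi⟩
        · exact Or.inl (((ihψ j hj2).2).mpr h)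
        · exact Or.inr ⟨i, ⟨hi1, hi2⟩, ((ihφ i (by omega)).2).mpr hφi⟩

lemma sat_tiff {β : Type} {n : ℕ} {H T : ℕ → Set β} {k : ℕ} {A B : TForm β} :
    sat n H T k (tiff A B) ↔
      ((sat n H T k A ↔ sat n H T k B) ∧ (sat n T T k A ↔ sat n T T k B)) := by
  simp only [tiff, sat]; tauto

lemma sat_tneg {β : Type} {n : ℕ} {H T : ℕ → Set β} {k : ℕ} {A : TForm β} :
    sat n H T k (tneg A) ↔ (¬ sat n H T k A ∧ ¬ sat n T T k A) := by
  simp [tneg, sat]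

lemma sat_ttop {β : Type} {n : ℕ} {H T : ℕ → Set β} {k : ℕ} : sat n H T k (ttop : TForm β) := by
  simp only [ttop, tneg, sat]; tauto

lemma sat_talways {β : Type} {n : ℕ} {H T : ℕ → Set β} {k : ℕ} {A : TForm β} :
    sat n H T k (talways A) ↔ ∀ j, k ≤ j → j < n → sat n H T j A := by
  simp only [talways, sat]
  constructor
  · intro h j h1 h2
    rcases h j h1 h2 with h | ⟨i, _, _, hf⟩
    · exact h
    · exact absurd hf id
  · intro h j h1 h2; exact Or.inl (h j h1 h2)

lemma sat_next_ttop {β : Type} {n : ℕ} {H T : ℕ → Set β} {k : ℕ} :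
    sat n H T k (TForm.next (ttop : TForm β)) ↔ k + 1 < n := by
  simp [sat, ttop, tneg]

lemma sat_tneg_next_ttop {β : Type} {n : ℕ} {H T : ℕ → Set β} {k : ℕ} :
    sat n H T k (tneg (TForm.next (ttop : TForm β))) ↔ ¬ (k + 1 < n) := by
  simp [sat, ttop, tneg]

lemma sat_twnext_talways {β : Type} {n : ℕ} {H T : ℕ → Set β} {A : TForm β} :
    sat n H T 0 (twnext (talways A)) ↔ ∀ j, 1 ≤ j → j < n → sat n H T j A := by
  simp only [twnext, sat]
  constructor
  · rintro (⟨h, -⟩ | ⟨hn, h⟩) j hj1 hj2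
    · exact absurd ⟨by omega, fun f => f, fun f => f⟩ h
    · rcases h j hj1 hj2 with h' | ⟨i, -, -, hf⟩
      · exact h'
      · exact hf.elim
  · intro h
    by_cases hn : 0 + 1 < n
    · exact Or.inr ⟨hn, fun j hj1 hj2 => Or.inl (h j hj1 hj2)⟩
    · exact Or.inl ⟨fun hh => hn hh.1, fun hh => hn hh.1⟩

lemma sat_since_zero {β : Type} {n : ℕ} {H T : ℕ → Set β} {φ ψ : TForm β} :
    sat n H T 0 (.since φ ψ) ↔ sat n H T 0 ψ := by
  simp only [sat]
  constructor
  · rintro ⟨j, hj, h, -⟩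
    interval_cases j
    exact h
  · intro h; exact ⟨0, le_refl _, h, by omega⟩

lemma sat_since_succ {β : Type} {n : ℕ} {H T : ℕ → Set β} {φ ψ : TForm β} (k : ℕ) :
    sat n H T (k + 1) (.since φ ψ) ↔
      sat n H T (k + 1) ψ ∨ (sat n H T (k + 1) φ ∧ sat n H T k (.since φ ψ)) := by
  simp only [sat]
  constructor
  · rintro ⟨j, hj, hψ, hφ⟩
    by_cases h : j = k + 1
    · subst h; exact Or.inl hψ
    · refine Or.inr ⟨hφ (k + 1) (by omega) (le_refl _),
        j, by omega, hψ, fun i h1 h2 => hφ i h1 (by omega)⟩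
  · rintro (h | ⟨hφ, j, hj, hψ, hall⟩)
    · exact ⟨k + 1, le_refl _, h, by omega⟩
    · refine ⟨j, by omega, hψ, fun i h1 h2 => ?_⟩
      by_cases hik : i = k + 1
      · subst hik; exact hφ
      · exact hall i h1 (by omega)

lemma sat_trig_zero {β : Type} {n : ℕ} {H T : ℕ → Set β} {φ ψ : TForm β} :
    sat n H T 0 (.trig φ ψ) ↔ sat n H T 0 ψ := by
  simp only [sat]
  constructor
  · intro h
    rcases h 0 (le_refl _) with h | ⟨i, h1, h2, -⟩
    · exact h
    · omega
  · intro h j hj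
    interval_cases j
    exact Or.inl h

lemma sat_trig_succ {β : Type} {n : ℕ} {H T : ℕ → Set β} {φ ψ : TForm β} (k : ℕ) :
    sat n H T (k + 1) (.trig φ ψ) ↔
      sat n H T (k + 1) ψ ∧ (sat n H T (k + 1) φ ∨ sat n H T k (.trig φ ψ)) := by
  simp only [sat]
  constructor
  · intro h
    have hk1 := h (k + 1) (le_refl _)
    have hk1' : sat n H T (k + 1) ψ := by
      rcases hk1 with h' | ⟨i, h1, h2, -⟩
      · exact h'
      · omega
    refine ⟨hk1', ?_⟩
    by_cases hφ : sat n H T (k + 1) φ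
    · exact Or.inl hφ
    · refine Or.inr fun j hj => ?_
      rcases h j (by omega) with h' | ⟨i, h1, h2, hφi⟩
      · exact Or.inl h'
      · by_cases hik : i = k + 1
        · subst hik; exact absurd hφi hφ
        · exact Or.inr ⟨i, h1, by omega, hφi⟩
  · rintro ⟨hψ, hrest⟩ j hj
    by_cases hjk : j = k + 1
    · subst hjk; exact Or.inl hψ
    · rcases hrest with hφ | htr
      · exact Or.inr ⟨k + 1, by omega, le_refl _, hφ⟩
      · rcases htr j (by omega) with h' | ⟨i, h1, h2, hφi⟩
        · exact Or.inl h'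
        · exact Or.inr ⟨i, h1, by omega, hφi⟩

lemma sat_untl_last {β : Type} {n : ℕ} {H T : ℕ → Set β} {φ ψ : TForm β} {k : ℕ}
    (hk : k < n) (h : k + 1 = n) :
    sat n H T k (.untl φ ψ) ↔ sat n H T k ψ := by
  simp only [sat]
  constructor
  · rintro ⟨j, h1, h2, hψ, -⟩
    have : j = k := by omega
    subst this; exact hψ
  · intro hψ; exact ⟨k, le_refl _, hk, hψ, by omega⟩

lemma sat_untl_succ {β : Type} {n : ℕ} {H T : ℕ → Set β} {φ ψ : TForm β} {k : ℕ}
    (hk : k + 1 < n) :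
    sat n H T k (.untl φ ψ) ↔
      sat n H T k ψ ∨ (sat n H T k φ ∧ sat n H T (k + 1) (.untl φ ψ)) := by
  simp only [sat]
  constructor
  · rintro ⟨j, h1, h2, hψ, hall⟩
    by_cases hjk : j = k
    · subst hjk; exact Or.inl hψ
    · refine Or.inr ⟨hall k (le_refl _) (by omega),
        j, by omega, h2, hψ, fun i hi1 hi2 => hall i (by omega) hi2⟩
  · rintro (h | ⟨hφ, j, h1, h2, hψ, hall⟩)
    · exact ⟨k, le_refl _, by omega, h, by omega⟩
    · refine ⟨j, by omega, h2, hψ, fun i hi1 hi2 => ?_⟩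
      by_cases hik : i = k
      · subst hik; exact hφ
      · exact hall i (by omega) hi2

lemma sat_rels_last {β : Type} {n : ℕ} {H T : ℕ → Set β} {φ ψ : TForm β} {k : ℕ}
    (hk : k < n) (h : k + 1 = n) :
    sat n H T k (.rels φ ψ) ↔ sat n H T k ψ := by
  simp only [sat]
  constructor
  · intro hall
    rcases hall k (le_refl _) hk with h' | ⟨i, h1, h2, -⟩
    · exact h'
    · omega
  · intro hψ j h1 h2
    have : j = k := by omega
    subst this; exact Or.inl hψ

lemma sat_rels_succ {β : Type} {n : ℕ} {H T : ℕ → Set β} {φ ψ : TForm β} {k : ℕ}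
    (hk : k + 1 < n) :
    sat n H T k (.rels φ ψ) ↔
      sat n H T k ψ ∧ (sat n H T k φ ∨ sat n H T (k + 1) (.rels φ ψ)) := by
  simp only [sat]
  constructor
  · intro h
    have hψ : sat n H T k ψ := by
      rcases h k (le_refl _) (by omega) with h' | ⟨i, h1, h2, -⟩
      · exact h'
      · omega
    refine ⟨hψ, ?_⟩
    by_cases hφ : sat n H T k φ
    · exact Or.inl hφ
    · refine Or.inr fun j hj1 hj2 => ?_
      rcases h j (by omega) hj2 with h' | ⟨i, h1, h2, hφi⟩
      · exact Or.inl h'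
      · by_cases hik : i = k
        · subst hik; exact absurd hφi hφ
        · exact Or.inr ⟨i, by omega, h2, hφi⟩
  · rintro ⟨hψ, hrest⟩ j hj1 hj2
    by_cases hjk : j = k
    · subst hjk; exact Or.inl hψ
    · rcases hrest with hφ | hr
      · exact Or.inr ⟨k, le_refl _, by omega, hφ⟩
      · rcases hr j (by omega) hj2 with h' | ⟨i, h1, h2, hφi⟩
        · exact Or.inl h'
        · exact Or.inr ⟨i, by omega, h2, hφi⟩

lemma sat_conj' {β : Type} {n : ℕ} {H T : ℕ → Set β} {k : ℕ} {A B : TForm β} :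
    sat n H T k (.conj A B) ↔ (sat n H T k A ∧ sat n H T k B) := Iff.rfl
lemma sat_disj' {β : Type} {n : ℕ} {H T : ℕ → Set β} {k : ℕ} {A B : TForm β} :
    sat n H T k (.disj A B) ↔ (sat n H T k A ∨ sat n H T k B) := Iff.rfl
lemma sat_impl' {β : Type} {n : ℕ} {H T : ℕ → Set β} {k : ℕ} {A B : TForm β} :
    sat n H T k (.impl A B) ↔
      ((sat n H T k A → sat n H T k B) ∧ (sat n T T k A → sat n T T k B)) := Iff.rfl
lemma sat_prev' {β : Type} {n : ℕ} {H T : ℕ → Set β} {k : ℕ} {A : TForm β} :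
    sat n H T k (.prev A) ↔ (0 < k ∧ sat n H T (k - 1) A) := Iff.rfl
lemma sat_next' {β : Type} {n : ℕ} {H T : ℕ → Set β} {k : ℕ} {A : TForm β} :
    sat n H T k (.next A) ↔ (k + 1 < n ∧ sat n H T (k + 1) A) := Iff.rfl

theorem eta_satisfied' {α : Type} (H T : ℕ → Set α) (H' T' : ℕ → Set (ExtAlph α))
    (n : ℕ) (hlen : 0 < n)
    (hHT : ∀ i, i < n → H i ⊆ T i) (hHT' : ∀ i, i < n → H' i ⊆ T' i)
    (hlab : ∀ (φ : TForm α) (k : ℕ), k < n → val H' T' n k (lab φ) = val H T n k φ) :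
    ∀ (μ : TForm α), ∀ δ ∈ eta μ, sat n H' T' 0 δ := by
  have hv := valsat H T n hHT
  have hv' := valsat H' T' n hHT'
  have labH : ∀ (φ : TForm α) (k : ℕ), k < n →
      (sat n H' T' k (lab φ) = sat n H T k φ) := by
    intro φ k hk
    apply propext
    rw [← (hv' (lab φ) k hk).1, hlab φ k hk, (hv φ k hk).1]
  have labT : ∀ (φ : TForm α) (k : ℕ), k < n →
      (sat n T' T' k (lab φ) = sat n T T k φ) := by
    intro φ k hk
    apply propext
    rw [← (hv' (lab φ) k hk).2, hlab φ k hk, (hv φ k hk).2]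
  intro μ δ hδ
  cases μ with
  | bot => simp [eta] at hδ
  | atom a => simp [eta] at hδ
  | conj φ ψ =>
    simp only [eta, Set.mem_singleton_iff] at hδ; subst hδ
    rw [sat_talways]; intro j h0 hj
    rw [sat_tiff, labH _ j hj, labT _ j hj]
    constructor
    · rw [sat_conj', sat_conj', labH φ j hj, labH ψ j hj]
    · rw [sat_conj', sat_conj', labT φ j hj, labT ψ j hj]
  | disj φ ψ =>
    simp only [eta, Set.mem_singleton_iff] at hδ; subst hδ
    rw [sat_talways]; intro j h0 hj
    rw [sat_tiff, labH _ j hj, labT _ j hj]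
    constructor
    · rw [sat_disj', sat_disj', labH φ j hj, labH ψ j hj]
    · rw [sat_disj', sat_disj', labT φ j hj, labT ψ j hj]
  | impl φ ψ =>
    simp only [eta, Set.mem_singleton_iff] at hδ; subst hδ
    rw [sat_talways]; intro j h0 hj
    rw [sat_tiff, labH _ j hj, labT _ j hj]
    constructor
    · rw [sat_impl', sat_impl', labH φ j hj, labH ψ j hj, labT φ j hj, labT ψ j hj]
    · rw [sat_impl', sat_impl', labT φ j hj, labT ψ j hj]
  | prev φ =>
    simp only [eta, Set.mem_insert_iff, Set.mem_singleton_iff] at hδ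
    rcases hδ with rfl | rfl
    · rw [sat_twnext_talways]; intro j h1 hj
      have hj1 : j - 1 < n := by omega
      rw [sat_tiff, labH _ j hj, labT _ j hj]
      constructor
      · rw [sat_prev', sat_prev', labH φ (j-1) hj1]
      · rw [sat_prev', sat_prev', labT φ (j-1) hj1]
    · rw [sat_tneg, labH _ 0 hlen, labT _ 0 hlen]
      constructor <;> simp [sat]
  | since φ ψ =>
    simp only [eta, Set.mem_insert_iff, Set.mem_singleton_iff] at hδ
    rcases hδ with rfl | rfl
    · rw [sat_twnext_talways]; intro j h1 hj
      obtain ⟨j', rfl⟩ : ∃ j', j = j' + 1 := ⟨j - 1, by omega⟩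
      have hj' : j' < n := by omega
      have hp : 0 < j' + 1 := Nat.succ_pos _
      rw [sat_tiff, labH _ (j'+1) hj, labT _ (j'+1) hj]
      constructor
      · rw [sat_disj', sat_conj', sat_prev', Nat.add_sub_cancel,
            labH ψ _ hj, labH φ _ hj, labH (.since φ ψ) j' hj', sat_since_succ]
        tauto
      · rw [sat_disj', sat_conj', sat_prev', Nat.add_sub_cancel,
            labT ψ _ hj, labT φ _ hj, labT (.since φ ψ) j' hj', sat_since_succ]
        tauto
    · rw [sat_tiff, labH _ 0 hlen, labT _ 0 hlen, labH ψ 0 hlen, labT ψ 0 hlen,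
          sat_since_zero, sat_since_zero]
      exact ⟨Iff.rfl, Iff.rfl⟩
  | trig φ ψ =>
    simp only [eta, Set.mem_insert_iff, Set.mem_singleton_iff] at hδ
    rcases hδ with rfl | rfl
    · rw [sat_twnext_talways]; intro j h1 hj
      obtain ⟨j', rfl⟩ : ∃ j', j = j' + 1 := ⟨j - 1, by omega⟩
      have hj' : j' < n := by omega
      have hp : 0 < j' + 1 := Nat.succ_pos _
      rw [sat_tiff, labH _ (j'+1) hj, labT _ (j'+1) hj]
      constructor
      · rw [sat_conj', sat_disj', sat_prev', Nat.add_sub_cancel,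
            labH ψ _ hj, labH φ _ hj, labH (.trig φ ψ) j' hj', sat_trig_succ]
        tauto
      · rw [sat_conj', sat_disj', sat_prev', Nat.add_sub_cancel,
            labT ψ _ hj, labT φ _ hj, labT (.trig φ ψ) j' hj', sat_trig_succ]
        tauto
    · rw [sat_tiff, labH _ 0 hlen, labT _ 0 hlen, labH ψ 0 hlen, labT ψ 0 hlen,
          sat_trig_zero, sat_trig_zero]
      exact ⟨Iff.rfl, Iff.rfl⟩
  | next φ =>
    simp only [eta, Set.mem_insert_iff, Set.mem_singleton_iff] at hδ
    rcases hδ with rfl | rfl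
    · rw [sat_twnext_talways]; intro j h1 hj
      obtain ⟨j', rfl⟩ : ∃ j', j = j' + 1 := ⟨j - 1, by omega⟩
      have hj' : j' < n := by omega
      rw [sat_tiff]
      constructor
      · rw [sat_prev', Nat.add_sub_cancel, labH (.next φ) j' hj', labH φ _ hj, sat_next']
        constructor
        · rintro ⟨-, -, h⟩; exact h
        · intro h; exact ⟨Nat.succ_pos _, hj, h⟩
      · rw [sat_prev', Nat.add_sub_cancel, labT (.next φ) j' hj', labT φ _ hj, sat_next']
        constructor
        · rintro ⟨-, -, h⟩; exact h
        · intro h; exact ⟨Nat.succ_pos _, hj, h⟩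
    · rw [sat_talways]; intro j h0 hj
      rw [sat_impl']
      constructor
      · intro h
        rw [sat_tneg_next_ttop] at h
        rw [sat_tneg, labH _ j hj, labT _ j hj]
        exact ⟨fun hh => h hh.1, fun hh => h hh.1⟩
      · intro h
        rw [sat_tneg_next_ttop] at h
        rw [sat_tneg, labT _ j hj]
        exact ⟨fun hh => h hh.1, fun hh => h hh.1⟩
  | untl φ ψ =>
    simp only [eta, Set.mem_insert_iff, Set.mem_singleton_iff] at hδ
    rcases hδ with rfl | rfl
    · rw [sat_twnext_talways]; intro j h1 hj
      obtain ⟨j', rfl⟩ : ∃ j', j = j' + 1 := ⟨j - 1, by omega⟩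
      have hj' : j' < n := by omega
      have hp : 0 < j' + 1 := Nat.succ_pos _
      rw [sat_tiff]
      constructor
      · rw [sat_prev', sat_disj', sat_prev', sat_conj', sat_prev', Nat.add_sub_cancel,
            labH (.untl φ ψ) j' hj', labH ψ j' hj', labH φ j' hj',
            labH (.untl φ ψ) (j'+1) hj, sat_untl_succ hj]
        tauto
      · rw [sat_prev', sat_disj', sat_prev', sat_conj', sat_prev', Nat.add_sub_cancel,
            labT (.untl φ ψ) j' hj', labT ψ j' hj', labT φ j' hj',
            labT (.untl φ ψ) (j'+1) hj, sat_untl_succ hj]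
        tauto
    · rw [sat_talways]; intro j h0 hj
      rw [sat_impl']
      constructor
      · intro h
        rw [sat_tneg_next_ttop] at h
        have hlast : j + 1 = n := by omega
        rw [sat_tiff, labH _ j hj, labT _ j hj, labH ψ j hj, labT ψ j hj,
            sat_untl_last hj hlast, sat_untl_last hj hlast]
        exact ⟨Iff.rfl, Iff.rfl⟩
      · intro h
        rw [sat_tneg_next_ttop] at h
        have hlast : j + 1 = n := by omega
        rw [sat_tiff, labT _ j hj, labT ψ j hj, sat_untl_last hj hlast]
        exact ⟨Iff.rfl, Iff.rfl⟩
  | rels φ ψ =>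
    simp only [eta, Set.mem_insert_iff, Set.mem_singleton_iff] at hδ
    rcases hδ with rfl | rfl
    · rw [sat_twnext_talways]; intro j h1 hj
      obtain ⟨j', rfl⟩ : ∃ j', j = j' + 1 := ⟨j - 1, by omega⟩
      have hj' : j' < n := by omega
      have hp : 0 < j' + 1 := Nat.succ_pos _
      rw [sat_tiff]
      constructor
      · rw [sat_prev', sat_conj', sat_prev', sat_disj', sat_prev', Nat.add_sub_cancel,
            labH (.rels φ ψ) j' hj', labH ψ j' hj', labH φ j' hj',
            labH (.rels φ ψ) (j'+1) hj, sat_rels_succ hj]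
        tauto
      · rw [sat_prev', sat_conj', sat_prev', sat_disj', sat_prev', Nat.add_sub_cancel,
            labT (.rels φ ψ) j' hj', labT ψ j' hj', labT φ j' hj',
            labT (.rels φ ψ) (j'+1) hj, sat_rels_succ hj]
        tauto
    · rw [sat_talways]; intro j h0 hj
      rw [sat_impl']
      constructor
      · intro h
        rw [sat_tneg_next_ttop] at h
        have hlast : j + 1 = n := by omega
        rw [sat_tiff, labH _ j hj, labT _ j hj, labH ψ j hj, labT ψ j hj,
            sat_rels_last hj hlast, sat_rels_last hj hlast]
        exact ⟨Iff.rfl, Iff.rfl⟩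
      · intro h
        rw [sat_tneg_next_ttop] at h
        have hlast : j + 1 = n := by omega
        rw [sat_tiff, labT _ j hj, labT ψ j hj, sat_rels_last hj hlast]
        exact ⟨Iff.rfl, Iff.rfl⟩


/-- Let `⟨H,T⟩` and `⟨H',T'⟩` be HT-traces of the same length `n`
over `𝒜` and `𝒜⁺` respectively, with valuations `m` and `m'`.  If
`m'[k, L_φ] = m[k, φ]` for every formula `φ` over `𝒜` and every `k < n`, then
`⟨H',T'⟩` satisfies (at time 0) every formula of the definition `η(μ)`, for
every formula `μ` over `𝒜`. -/
theorem eta_satisfied {α : Type} (H T : ℕ → Set α) (H' T' : ℕ → Set (ExtAlph α))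
    (n : ℕ) (hlen : 0 < n)
    (hHT : ∀ i, i < n → H i ⊆ T i) (hHT' : ∀ i, i < n → H' i ⊆ T' i)
    (hlab : ∀ (φ : TForm α) (k : ℕ), k < n → val H' T' n k (lab φ) = val H T n k φ) :
    ∀ (μ : TForm α), ∀ δ ∈ eta μ, sat n H' T' 0 δ :=
  eta_satisfied' H T H' T' n hlen hHT hHT' hlab
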